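/- arXiv:math/9604231 — 6 statements merged into one kernel-verified Lean document; each statement's English description precedes it below -/
import Mathlib

section
/- For 0 < ν < 1, the map h_ν(θ) = (2/π) arctan(((ν+1)tan(πθ/2) + (ν-1)) / ((ν-1)tan(πθ/2) + (ν+1))) satisfies h_ν(h_μ(θ)) = h_{νμ}(θ) for all θ in the open interval (-1/2, 1/2) and all 0 < μ < 1. -/
noncomputable def h (ν θ : ℝ) : ℝ :=
  (2 / Real.pi) * Real.arctan
    (((ν + 1) * Real.tan (Real.pi * θ / 2) + (ν - 1)) /
     ((ν - 1) * Real.tan (Real.pi * θ / 2) + (ν + 1)))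

theorem h_group_law (ν μ : ℝ) (hν : 0 < ν) (hν1 : ν < 1)
    (hμ : 0 < μ) (hμ1 : μ < 1)
    (θ : ℝ) (hθ : θ ∈ Set.Ioo (-(1/2) : ℝ) (1/2)) :
    h ν (h μ θ) = h (ν * μ) θ := by
  obtain ⟨hθ1, hθ2⟩ := hθ
  have hpi := Real.pi_pos
  set t := Real.tan (Real.pi * θ / 2) with ht
  -- bounds on the angle
  have hang1 : -(Real.pi/4) < Real.pi * θ / 2 := by nlinarith
  have hang2 : Real.pi * θ / 2 < Real.pi/4 := by nlinarith
  have h4 : (Real.pi/4 : ℝ) < Real.pi/2 := by linarith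
  have hmem : Real.pi * θ / 2 ∈ Set.Ioo (-(Real.pi/2)) (Real.pi/2) :=
    ⟨by linarith, by linarith⟩
  have hmem4 : (Real.pi/4 : ℝ) ∈ Set.Ioo (-(Real.pi/2)) (Real.pi/2) :=
    ⟨by linarith, h4⟩
  have hmem4' : (-(Real.pi/4) : ℝ) ∈ Set.Ioo (-(Real.pi/2)) (Real.pi/2) :=
    ⟨by linarith, by linarith⟩
  have ht1 : t < 1 := by
    have := Real.strictMonoOn_tan hmem hmem4 hang2
    rwa [Real.tan_pi_div_four] at this
  have ht2 : -1 < t := by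
    have := Real.strictMonoOn_tan hmem4' hmem hang1
    rwa [Real.tan_neg, Real.tan_pi_div_four] at this
  -- denominator 1
  have hD1 : 0 < (μ - 1) * t + (μ + 1) := by nlinarith
  set s := ((μ + 1) * t + (μ - 1)) / ((μ - 1) * t + (μ + 1)) with hs
  have hs1 : s < 1 := by
    rw [hs, div_lt_one hD1]; nlinarith
  have hs2 : -1 < s := by
    rw [hs, lt_div_iff₀ hD1]; nlinarith
  have hD2 : 0 < (ν - 1) * s + (ν + 1) := by nlinarith
  have hD3 : 0 < (ν * μ - 1) * t + (ν * μ + 1) := by nlinarith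
  have htan : Real.tan (Real.pi * (h μ θ) / 2) = s := by
    have : Real.pi * (h μ θ) / 2 = Real.arctan s := by
      rw [h]; field_simp
      rw [hs, ht, mul_comm (μ - 1)]
    rw [this, Real.tan_arctan]
  conv_lhs => rw [h]
  rw [htan, h]
  congr 1
  have hN : 0 < (ν - 1) * ((μ + 1) * t + (μ - 1)) + (ν + 1) * ((μ - 1) * t + (μ + 1)) := by
    nlinarith [hD3]
  congr 1
  rw [← ht, div_eq_div_iff hD2.ne' hD3.ne', hs]
  have hD1' : t * (μ - 1) + (μ + 1) ≠ 0 := by linarith [mul_comm t (μ - 1)]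
  field_simp
  ring
end

section
/- For 0 < δ < 1, ν = (1-√δ)/(1+√δ), and θ in (-1/2, 1/2), one has tan((π/2)(θ - h_ν(θ))) = √δ cos(πθ) / (1 - √δ sin(πθ)), and consequently θ - h_ν(θ) = (2/π) arctan(√δ cos(πθ)/(1 - √δ sin(πθ))). -/
theorem first_difference (δ : ℝ) (hδ : 0 < δ) (hδ1 : δ < 1)
    (θ : ℝ) (hθ : θ ∈ Set.Ioo (-(1/2) : ℝ) (1/2)) :
    let ν := (1 - Real.sqrt δ) / (1 + Real.sqrt δ)
    Real.tan (Real.pi / 2 * (θ - h ν θ)) =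
      Real.sqrt δ * Real.cos (Real.pi * θ) / (1 - Real.sqrt δ * Real.sin (Real.pi * θ)) ∧
    θ - h ν θ = (2 / Real.pi) * Real.arctan
      (Real.sqrt δ * Real.cos (Real.pi * θ) / (1 - Real.sqrt δ * Real.sin (Real.pi * θ))) := by
  intro ν
  obtain ⟨hθ1, hθ2⟩ := hθ
  have hpi : (0:ℝ) < Real.pi := Real.pi_pos
  set s := Real.sqrt δ with hs_def
  have hs0 : 0 < s := Real.sqrt_pos.mpr hδ
  have hs1 : s < 1 := by
    rw [hs_def, show (1:ℝ) = Real.sqrt 1 by simp]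
    exact Real.sqrt_lt_sqrt hδ.le hδ1
  set a := Real.pi * θ / 2 with ha_def
  have ha1 : -(Real.pi / 4) < a := by rw [ha_def]; nlinarith
  have ha2 : a < Real.pi / 4 := by rw [ha_def]; nlinarith
  set t := Real.tan a with ht_def
  have hpi4 : Real.pi / 4 < Real.pi / 2 := by linarith
  have ht1 : t < 1 := by
    have := Real.tan_lt_tan_of_lt_of_lt_pi_div_two (by linarith : -(Real.pi/2) < a) hpi4 ha2
    rwa [Real.tan_pi_div_four] at this
  have ht2 : -1 < t := by
    have := Real.tan_lt_tan_of_lt_of_lt_pi_div_two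
      (by linarith : -(Real.pi/2) < -(Real.pi/4)) (by linarith : a < Real.pi/2) ha1
    rwa [Real.tan_neg, Real.tan_pi_div_four] at this
  have h1st : (0:ℝ) < 1 - s * t := by nlinarith
  have hden : (0:ℝ) < 1 + t^2 - 2*s*t := by nlinarith [sq_nonneg (t - s)]
  have hs1' : (1:ℝ) + s ≠ 0 := by positivity
  -- simplify the argument of arctan in h
  have hA : ((ν + 1) * t + (ν - 1)) / ((ν - 1) * t + (ν + 1)) = (t - s) / (1 - s*t) := by
    have hν1 : ν + 1 = 2 / (1 + s) := by simp only [ν]; field_simp; ring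
    have hν2 : ν - 1 = -(2*s) / (1 + s) := by simp only [ν]; field_simp; ring
    have hd2 : -(2*s)/(1+s) * t + 2/(1+s) = 2*(1 - s*t)/(1+s) := by field_simp; ring
    rw [hν1, hν2, div_eq_div_iff (by rw [hd2]; exact ne_of_gt (div_pos (by linarith) (by linarith)))
      (ne_of_gt h1st)]
    field_simp
    ring
  set b := Real.arctan ((t - s) / (1 - s*t)) with hb_def
  have hh : h ν θ = 2 / Real.pi * b := by rw [h, ← ha_def, ← ht_def, hA]
  have hkey : Real.pi / 2 * (θ - h ν θ) = a - b := by
    rw [hh, ha_def]; field_simp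
  have htb : Real.tan b = (t - s) / (1 - s*t) := Real.tan_arctan _
  have hcb : 0 < Real.cos b := Real.cos_arctan_pos _
  have hca : 0 < Real.cos a := Real.cos_pos_of_mem_Ioo ⟨by linarith, by linarith⟩
  have hsa : Real.sin a = t * Real.cos a := by
    rw [ht_def, Real.tan_eq_sin_div_cos]; field_simp
  have hsb : Real.sin b * (1 - s*t) = (t - s) * Real.cos b := by
    have : Real.sin b = ((t - s) / (1 - s*t)) * Real.cos b := by
      rw [← htb, Real.tan_eq_sin_div_cos]; field_simp
    rw [this, div_mul_eq_mul_div, div_mul_eq_mul_div, mul_div_cancel_right₀ _ (ne_of_gt h1st)]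
  have hcos' : Real.cos (a - b) * (1 - s*t)
      = Real.cos a * Real.cos b * (1 + t^2 - 2*s*t) := by
    rw [Real.cos_sub]
    linear_combination Real.sin a * hsb + (t - s) * Real.cos b * hsa
  have hcospos : 0 < Real.cos (a - b) := by
    nlinarith [mul_pos (mul_pos hca hcb) hden]
  have hpyth : Real.sin a ^ 2 + Real.cos a ^ 2 = 1 := Real.sin_sq_add_cos_sq a
  have h2a : Real.pi * θ = 2 * a := by rw [ha_def]; ring
  have hcos2a : Real.cos (Real.pi * θ) = (1 - t^2) * Real.cos a ^ 2 := by
    rw [h2a, Real.cos_two_mul]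
    linear_combination hpyth - (t * Real.cos a + Real.sin a) * hsa
  have hsin2a : 1 - s * Real.sin (Real.pi * θ) = (1 + t^2 - 2*s*t) * Real.cos a ^ 2 := by
    rw [h2a, Real.sin_two_mul]
    linear_combination (t * Real.cos a + Real.sin a - 2 * s * Real.cos a) * hsa - hpyth
  have hR : s * Real.cos (Real.pi * θ) / (1 - s * Real.sin (Real.pi * θ))
      = s * (1 - t^2) / (1 + t^2 - 2*s*t) := by
    rw [hcos2a, hsin2a, div_eq_div_iff (ne_of_gt (mul_pos hden (pow_pos hca 2)))
      (ne_of_gt hden)]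
    ring
  have hnum : (Real.sin a * Real.cos b - Real.cos a * Real.sin b) * (1 - s*t)
      = s * (1 - t^2) * Real.cos a * Real.cos b := by
    linear_combination Real.cos b * (1 - s*t) * hsa - Real.cos a * hsb
  have hG2 : (Real.sin a * Real.cos b - Real.cos a * Real.sin b) * (1 + t^2 - 2*s*t)
      = s * (1 - t^2) * Real.cos (a - b) :=
    mul_right_cancel₀ (ne_of_gt h1st)
      (by linear_combination (1 + t^2 - 2*s*t) * hnum - s * (1 - t^2) * hcos')
  have htan : Real.tan (a - b) = s * (1 - t^2) / (1 + t^2 - 2*s*t) := by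
    rw [Real.tan_eq_sin_div_cos, Real.sin_sub,
      div_eq_div_iff (ne_of_gt hcospos) (ne_of_gt hden)]
    linear_combination hG2
  have hfirst : Real.tan (Real.pi / 2 * (θ - h ν θ))
      = s * Real.cos (Real.pi * θ) / (1 - s * Real.sin (Real.pi * θ)) := by
    rw [hkey, htan, hR]
  refine ⟨hfirst, ?_⟩
  have hb1 : -(Real.pi/2) < b := Real.neg_pi_div_two_lt_arctan _
  have hb2 : b < Real.pi/2 := Real.arctan_lt_pi_div_two _
  have hab1 : -(Real.pi/2) < a - b := by
    by_contra hc
    push_neg at hc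
    have h1 : Real.pi / 2 ≤ -(a - b) := by linarith
    have h2 : -(a - b) ≤ Real.pi + Real.pi / 2 := by linarith
    have := Real.cos_nonpos_of_pi_div_two_le_of_le h1 h2
    rw [Real.cos_neg] at this
    linarith
  have hab2 : a - b < Real.pi/2 := by
    by_contra hc
    push_neg at hc
    have := Real.cos_nonpos_of_pi_div_two_le_of_le hc (by linarith)
    linarith
  have harc : Real.arctan (s * Real.cos (Real.pi * θ) / (1 - s * Real.sin (Real.pi * θ)))
      = a - b := by
    rw [← hfirst, hkey, Real.arctan_tan hab1 hab2]
  rw [harc, ← hkey]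
  field_simp
end

section
/- For 0 < δ < 1, ν = (1-√δ)/(1+√δ), and θ in (-1/2, 1/2), the inverse map satisfies θ - h_ν^{-1}(θ) = (2/π) arctan(-√δ cos(πθ)/(1 + √δ sin(πθ))). -/
set_option maxHeartbeats 1000000


theorem inverse_difference (δ : ℝ) (hδ : 0 < δ) (hδ1 : δ < 1)
    (θ : ℝ) (hθ : θ ∈ Set.Ioo (-(1/2) : ℝ) (1/2)) :
    let ν := (1 - Real.sqrt δ) / (1 + Real.sqrt δ)
    θ - h (1/ν) θ = (2 / Real.pi) * Real.arctan
      (-(Real.sqrt δ * Real.cos (Real.pi * θ)) / (1 + Real.sqrt δ * Real.sin (Real.pi * θ))) := by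
  intro ν
  obtain ⟨hθ1, hθ2⟩ := hθ
  have hπ := Real.pi_pos
  set s := Real.sqrt δ with hs
  have hs0 : 0 < s := Real.sqrt_pos.2 hδ
  have hsq : s ^ 2 = δ := Real.sq_sqrt hδ.le
  have hs1 : s < 1 := by nlinarith
  have hmem1 : -(Real.pi / 2) < Real.pi * θ / 2 := by nlinarith
  have hmem2 : Real.pi * θ / 2 < Real.pi / 2 := by nlinarith
  set t := Real.tan (Real.pi * θ / 2) with ht
  have ht1 : t < 1 := by
    rw [ht, ← Real.tan_pi_div_four]
    exact Real.tan_lt_tan_of_lt_of_lt_pi_div_two hmem1 (by linarith) (by nlinarith)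
  have ht2 : -1 < t := by
    rw [ht, show (-1 : ℝ) = Real.tan (-(Real.pi / 4)) by simp [Real.tan_pi_div_four]]
    exact Real.tan_lt_tan_of_lt_of_lt_pi_div_two (by linarith) hmem2 (by nlinarith)
  have hst : 0 < 1 + s * t := by nlinarith
  have hθeq : Real.arctan t = Real.pi * θ / 2 := Real.arctan_tan hmem1 hmem2
  have h1s : (1 : ℝ) - s ≠ 0 := by linarith
  have hνinv : (1 : ℝ) / ν = (1 + s) / (1 - s) := by
    show (1 : ℝ) / ((1 - s) / (1 + s)) = (1 + s) / (1 - s)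
    rw [one_div_div]
  clear_value ν t s
  set u := (t + s) / (1 + s * t) with hu
  have key : ((1 / ν + 1) * t + (1 / ν - 1)) / ((1 / ν - 1) * t + (1 / ν + 1)) = u := by
    rw [hνinv, hu]
    have hden : ((1 + s) / (1 - s) - 1) * t + ((1 + s) / (1 - s) + 1) ≠ 0 := by
      have e : ((1 + s) / (1 - s) - 1) * t + ((1 + s) / (1 - s) + 1)
          = (2 * s * t + 2) / (1 - s) := by field_simp; ring
      rw [e]
      exact div_ne_zero (by nlinarith) h1s
    have h2st : (1 : ℝ) + s * t ≠ 0 := ne_of_gt hst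
    rw [div_eq_div_iff hden h2st]
    field_simp
    ring
  have htu : 0 < 1 + t * u := by
    rw [hu]
    have : 1 + t * ((t + s) / (1 + s * t)) = ((t + s) ^ 2 + (1 - s ^ 2)) / (1 + s * t) := by
      field_simp [show (1:ℝ) + t * s ≠ 0 by nlinarith]; ring
    rw [this]
    apply div_pos (by nlinarith) hst
  have harc : Real.arctan t - Real.arctan u = Real.arctan ((t - u) / (1 + t * u)) := by
    have h' : t * (-u) < 1 := by nlinarith
    have h2 := Real.arctan_add h'
    rw [Real.arctan_neg] at h2
    have e : (t + -u) / (1 - t * -u) = (t - u) / (1 + t * u) := by ring_nf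
    rw [e] at h2
    linarith
  -- trig identities
  set c := Real.cos (Real.pi * θ / 2) with hc
  set si := Real.sin (Real.pi * θ / 2) with hsi
  have hc0 : 0 < c := Real.cos_pos_of_mem_Ioo ⟨hmem1, hmem2⟩
  have hpy : si ^ 2 + c ^ 2 = 1 := Real.sin_sq_add_cos_sq _
  have htsc : t = si / c := by rw [ht, hc, hsi]; exact Real.tan_eq_sin_div_cos _
  have hcos : Real.cos (Real.pi * θ) = c ^ 2 - si ^ 2 := by
    rw [show Real.pi * θ = 2 * (Real.pi * θ / 2) by ring, Real.cos_two_mul', ← hc, ← hsi]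
  have hsin : Real.sin (Real.pi * θ) = 2 * si * c := by
    rw [show Real.pi * θ = 2 * (Real.pi * θ / 2) by ring, Real.sin_two_mul, ← hsi, ← hc]
  clear_value c si u
  have hden2 : 0 < 1 + s * Real.sin (Real.pi * θ) := by
    nlinarith [Real.neg_one_le_sin (Real.pi * θ)]
  have hargeq : (t - u) / (1 + t * u)
      = -(s * Real.cos (Real.pi * θ)) / (1 + s * Real.sin (Real.pi * θ)) := by
    have ht2pos : (0 : ℝ) < 1 + t ^ 2 := by positivity
    have hsi' : si = t * c := by rw [htsc]; field_simp
    have hc2 : c ^ 2 * (1 + t ^ 2) = 1 := by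
      rw [hsi'] at hpy
      linear_combination hpy
    have hcos' : Real.cos (Real.pi * θ) = (1 - t ^ 2) / (1 + t ^ 2) := by
      rw [hcos, hsi', eq_div_iff ht2pos.ne']
      linear_combination (1 - t ^ 2) * hc2
    have hsin' : Real.sin (Real.pi * θ) = 2 * t / (1 + t ^ 2) := by
      rw [hsin, hsi', eq_div_iff ht2pos.ne']
      linear_combination 2 * t * hc2
    have htu' : (1 : ℝ) + t * ((t + s) / (1 + s * t)) ≠ 0 := by
      rw [← hu]; exact htu.ne'
    have hden2' : (1 : ℝ) + s * (2 * t / (1 + t ^ 2)) ≠ 0 := by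
      rw [← hsin']; exact hden2.ne'
    rw [hcos', hsin', hu]
    rw [div_eq_div_iff htu' hden2']
    field_simp [show (1:ℝ) + t * s ≠ 0 by nlinarith]
    ring
  -- put everything together
  have hh : h (1 / ν) θ = (2 / Real.pi) * Real.arctan u := by
    unfold h
    rw [← ht, key]
  rw [hh, ← hargeq, ← harc, hθeq]
  field_simp
end

section
/- Let V_δ(θ) = -(2/π) ∫_0^θ arctan(δ sin(2πt)/(1+δ cos(2πt))) dt for 0 < δ < 1. Then V_δ'(θ) = h_ν(θ) - 2θ + h_ν^{-1}(θ) for all θ in (-1/2, 1/2), where ν = (1-√δ)/(1+√δ). -/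
set_option maxHeartbeats 1000000

noncomputable def V (δ θ : ℝ) : ℝ :=
  -(2 / Real.pi) * ∫ t in (0 : ℝ)..θ,
    Real.arctan (δ * Real.sin (2 * Real.pi * t) / (1 + δ * Real.cos (2 * Real.pi * t)))

lemma aux_uv_lt (s t : ℝ) (hs0 : 0 < s) (hs1 : s < 1) (ht2 : -1 < t) (ht1 : t < 1) :
    (t - s) / (1 - s * t) * ((t + s) / (1 + s * t)) < 1 := by
  have h1 : (0:ℝ) < 1 - s * t := by nlinarith
  have h2 : (0:ℝ) < 1 + s * t := by nlinarith
  rw [div_mul_div_comm, div_lt_one (by positivity)]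
  have key : (1 - s * t) * (1 + s * t) - (t - s) * (t + s) = (1 + s^2) * (1 - t^2) := by ring
  have pos : (0:ℝ) < (1 + s^2) * (1 - t^2) := mul_pos (by positivity) (by nlinarith)
  linarith

lemma aux_q_eq (s t : ℝ) (hs0 : 0 < s) (hs1 : s < 1) (ht2 : -1 < t) (ht1 : t < 1) :
    ((t - s) / (1 - s * t) + (t + s) / (1 + s * t)) /
      (1 - (t - s) / (1 - s * t) * ((t + s) / (1 + s * t)))
    = (1 - s^2) * (2 * t / (1 - t^2)) / (1 + s^2) := by
  have h1 : (0:ℝ) < 1 - s * t := by nlinarith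
  have h2 : (0:ℝ) < 1 + s * t := by nlinarith
  have h3 : (0:ℝ) < 1 - t^2 := by nlinarith
  have h4 : (0:ℝ) < 1 + s^2 := by positivity
  have h5 : (0:ℝ) < 1 - (t - s) / (1 - s * t) * ((t + s) / (1 + s * t)) := by
    linarith [aux_uv_lt s t hs0 hs1 ht2 ht1]
  rw [div_eq_div_iff (ne_of_gt h5) (ne_of_gt h4)]
  have h1' : (1:ℝ) - t * s ≠ 0 := by nlinarith
  have h2' : (1:ℝ) + t * s ≠ 0 := by nlinarith
  field_simp
  ring

lemma aux_Wq_eq (δ S C : ℝ) (hδ : 0 < δ) (hδ1 : δ < 1) (hC : 0 < C) :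
    δ * (2 * S * C) / (1 + δ * (2 * C ^ 2 - 1)) * ((1 - δ) * (S / C) / (1 + δ))
    = 2 * δ * (1 - δ) * S ^ 2 / ((1 + δ * (2 * C ^ 2 - 1)) * (1 + δ)) := by
  have hD : (0:ℝ) < 1 + δ * (2 * C ^ 2 - 1) := by nlinarith
  field_simp

lemma aux_Wq_lt (δ S C : ℝ) (hδ : 0 < δ) (hδ1 : δ < 1) (hC : 0 < C)
    (hSC : S ^ 2 + C ^ 2 = 1) :
    δ * (2 * S * C) / (1 + δ * (2 * C ^ 2 - 1)) * ((1 - δ) * (S / C) / (1 + δ)) < 1 := by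
  have hD : (0:ℝ) < 1 + δ * (2 * C ^ 2 - 1) := by nlinarith
  rw [aux_Wq_eq δ S C hδ hδ1 hC, div_lt_one (by positivity)]
  nlinarith [sq_nonneg (1 - δ), sq_nonneg S, sq_nonneg C]

lemma aux_key3 (δ S C : ℝ) (hδ : 0 < δ) (hδ1 : δ < 1) (hC : 0 < C)
    (hSC : S ^ 2 + C ^ 2 = 1) :
    (δ * (2 * S * C) / (1 + δ * (2 * C ^ 2 - 1)) + (1 - δ) * (S / C) / (1 + δ)) * C
    = S * (1 - δ * (2 * S * C) / (1 + δ * (2 * C ^ 2 - 1)) * ((1 - δ) * (S / C) / (1 + δ))) := by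
  have hD : (0:ℝ) < 1 + δ * (2 * C ^ 2 - 1) := by nlinarith
  field_simp
  linear_combination (2*δ*(1-δ)*S) * hSC

open Real in
lemma key_identity (δ : ℝ) (hδ : 0 < δ) (hδ1 : δ < 1)
    (θ : ℝ) (hθ1 : -(1/2:ℝ) < θ) (hθ2 : θ < 1/2) :
    h ((1 - Real.sqrt δ) / (1 + Real.sqrt δ)) θ - 2 * θ
      + h (1 / ((1 - Real.sqrt δ) / (1 + Real.sqrt δ))) θ
    = -(2 / π) * arctan (δ * Real.sin (2 * π * θ) / (1 + δ * Real.cos (2 * π * θ))) := by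
  have hπ := Real.pi_pos
  set s : ℝ := Real.sqrt δ with hs
  have hs0 : 0 < s := Real.sqrt_pos.2 hδ
  have hs1 : s < 1 := by
    rw [hs, show (1:ℝ) = Real.sqrt 1 by simp]
    exact Real.sqrt_lt_sqrt hδ.le hδ1
  have hs2 : s ^ 2 = δ := Real.sq_sqrt hδ.le
  have hs1' : (0:ℝ) < 1 + s := by linarith
  have hs1'' : (0:ℝ) < 1 - s := by linarith
  set t : ℝ := Real.tan (π * θ / 2) with ht
  -- bounds on t
  have hhalf1 : -(π/4) < π * θ / 2 := by nlinarith
  have hhalf2 : π * θ / 2 < π/4 := by nlinarith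
  have ht1 : t < 1 := by
    rw [ht, ← Real.tan_pi_div_four]
    exact Real.tan_lt_tan_of_lt_of_lt_pi_div_two (by linarith) (by linarith) hhalf2
  have ht2 : -1 < t := by
    have : Real.tan (-(π/4)) < t :=
      Real.tan_lt_tan_of_lt_of_lt_pi_div_two (by linarith) (by linarith) hhalf1
    rwa [Real.tan_neg, Real.tan_pi_div_four] at this
  have hst1 : (0:ℝ) < 1 - s * t := by nlinarith
  have hst2 : (0:ℝ) < 1 + s * t := by nlinarith
  -- rewrite the two h-values as simple arctans
  have hfrac1 : (((1 - s) / (1 + s) + 1) * t + ((1 - s) / (1 + s) - 1)) /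
      (((1 - s) / (1 + s) - 1) * t + ((1 - s) / (1 + s) + 1)) = (t - s) / (1 - s * t) := by
    rw [show ((1 - s) / (1 + s) + 1) * t + ((1 - s) / (1 + s) - 1) = 2 * (t - s) / (1 + s) by
          field_simp; ring,
        show ((1 - s) / (1 + s) - 1) * t + ((1 - s) / (1 + s) + 1) = 2 * (1 - s * t) / (1 + s) by
          field_simp; ring,
        div_eq_div_iff (by positivity) (by positivity)]
    ring
  have hinv : 1 / ((1 - s) / (1 + s)) = (1 + s) / (1 - s) := one_div_div _ _
  have hfrac2 : (((1 + s) / (1 - s) + 1) * t + ((1 + s) / (1 - s) - 1)) /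
      (((1 + s) / (1 - s) - 1) * t + ((1 + s) / (1 - s) + 1)) = (t + s) / (1 + s * t) := by
    rw [show ((1 + s) / (1 - s) + 1) * t + ((1 + s) / (1 - s) - 1) = 2 * (t + s) / (1 - s) by
          field_simp; ring,
        show ((1 + s) / (1 - s) - 1) * t + ((1 + s) / (1 - s) + 1) = 2 * (1 + s * t) / (1 - s) by
          field_simp; ring,
        div_eq_div_iff (by positivity) (by positivity)]
    ring
  -- first arctan addition
  set u : ℝ := (t - s) / (1 - s * t) with hu
  set v : ℝ := (t + s) / (1 + s * t) with hv
  have huv : u * v < 1 := by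
    rw [hu, hv]; exact aux_uv_lt s t hs0 hs1 ht2 ht1
  -- trig setup
  set x : ℝ := π * θ with hx
  have hx1 : -(π/2) < x := by rw [hx]; nlinarith
  have hx2 : x < π/2 := by rw [hx]; nlinarith
  set S : ℝ := Real.sin x with hSdef
  set C : ℝ := Real.cos x with hCdef
  have hC : 0 < C := Real.cos_pos_of_mem_Ioo ⟨hx1, hx2⟩
  have hSC : S ^ 2 + C ^ 2 = 1 := Real.sin_sq_add_cos_sq x
  have htanx : Real.tan x = S / C := Real.tan_eq_sin_div_cos x
  have htan2 : 2 * t / (1 - t ^ 2) = Real.tan x := by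
    rw [ht, hx, ← Real.tan_two_mul]; ring_nf
  have hsin2 : Real.sin (2 * π * θ) = 2 * S * C := by
    rw [hSdef, hCdef, hx, show 2 * π * θ = 2 * (π * θ) by ring, Real.sin_two_mul]
  have hcos2 : Real.cos (2 * π * θ) = 2 * C ^ 2 - 1 := by
    rw [hCdef, hx, show 2 * π * θ = 2 * (π * θ) by ring, Real.cos_two_mul]
  set W : ℝ := δ * Real.sin (2 * π * θ) / (1 + δ * Real.cos (2 * π * θ)) with hW
  have hWeq : W = δ * (2 * S * C) / (1 + δ * (2 * C ^ 2 - 1)) := by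
    rw [hW, hsin2, hcos2]
  set q : ℝ := (1 - δ) * Real.tan x / (1 + δ) with hq2
  have hqeq : q = (1 - δ) * (S / C) / (1 + δ) := by rw [hq2, htanx]
  have hWq : W * q < 1 := by
    rw [hWeq, hqeq]; exact aux_Wq_lt δ S C hδ hδ1 hC hSC
  have hsum2 : arctan W + arctan q = x := by
    rw [Real.arctan_add hWq]
    have hfr : (W + q) / (1 - W * q) = Real.tan x := by
      rw [htanx, div_eq_div_iff (ne_of_gt (by linarith : (0:ℝ) < 1 - W * q)) (ne_of_gt hC),
        hWeq, hqeq]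
      exact aux_key3 δ S C hδ hδ1 hC hSC
    rw [hfr, Real.arctan_tan hx1 hx2]
  -- combine
  have harctanq : arctan u + arctan v = arctan q := by
    rw [Real.arctan_add huv]
    congr 1
    rw [hu, hv, aux_q_eq s t hs0 hs1 ht2 ht1, hs2, htan2, hq2]
  have hfinal : arctan u + arctan v = x - arctan W := by
    rw [harctanq]; linarith [hsum2]
  have hmain : (2 / π) * arctan u + (2 / π) * arctan v = 2 * θ - (2 / π) * arctan W := by
    rw [← mul_add, hfinal, hx, mul_sub,
      show 2 / π * (π * θ) = (π / π) * (2 * θ) by ring, div_self (ne_of_gt hπ), one_mul]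
  unfold h
  rw [← ht, hfrac1, hinv, hfrac2]
  linarith [hmain]

theorem V_deriv (δ : ℝ) (hδ : 0 < δ) (hδ1 : δ < 1)
    (θ : ℝ) (hθ : θ ∈ Set.Ioo (-(1/2) : ℝ) (1/2)) :
    let ν := (1 - Real.sqrt δ) / (1 + Real.sqrt δ)
    HasDerivAt (V δ) (h ν θ - 2 * θ + h (1/ν) θ) θ := by
  intro ν
  have hcont : Continuous fun t : ℝ =>
      Real.arctan (δ * Real.sin (2 * Real.pi * t) / (1 + δ * Real.cos (2 * Real.pi * t))) := by
    apply Real.continuous_arctan.comp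
    apply Continuous.div (by continuity) (by continuity)
    intro t
    have := Real.neg_one_le_cos (2 * Real.pi * t)
    nlinarith
  have haux : HasDerivAt (fun u : ℝ => ∫ t in (0:ℝ)..u,
      Real.arctan (δ * Real.sin (2 * Real.pi * t) / (1 + δ * Real.cos (2 * Real.pi * t))))
      (Real.arctan (δ * Real.sin (2 * Real.pi * θ) / (1 + δ * Real.cos (2 * Real.pi * θ)))) θ :=
    intervalIntegral.integral_hasDerivAt_right (hcont.intervalIntegrable _ _)
      hcont.aestronglyMeasurable.stronglyMeasurableAtFilter hcont.continuousAt
  have hV : HasDerivAt (V δ)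
      (-(2 / Real.pi) * Real.arctan (δ * Real.sin (2 * Real.pi * θ)
        / (1 + δ * Real.cos (2 * Real.pi * θ)))) θ := haux.const_mul _
  have hid := key_identity δ hδ hδ1 θ hθ.1 hθ.2
  show HasDerivAt (V δ) (h ((1 - Real.sqrt δ) / (1 + Real.sqrt δ)) θ - 2 * θ
      + h (1 / ((1 - Real.sqrt δ) / (1 + Real.sqrt δ))) θ) θ
  rw [hid]
  exact hV
end

section
/- For 0 < ν < 1, the bilateral series L̄ evaluated at z* = (1-√ν)/(1+√ν) equals 8 Σ_{t=0}^{∞} ν^{2t+1}/(1+ν^{2t+1})². -/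
noncomputable def Lbar (ν z : ℝ) : ℝ :=
  ∑' t : ℤ, 4 * ν ^ (2 * t) * (1 - z ^ 2) ^ 2 /
    ((1 - z) ^ 2 + ν ^ (2 * t) * (1 + z) ^ 2) ^ 2

theorem Lbar_at_zstar (ν : ℝ) (hν : 0 < ν) (hν1 : ν < 1) :
    Lbar ν ((1 - Real.sqrt ν) / (1 + Real.sqrt ν)) =
      8 * ∑' t : ℕ, ν ^ (2 * t + 1) / (1 + ν ^ (2 * t + 1)) ^ 2 := by
  have hν0 : ν ≠ 0 := hν.ne'
  have hs0 : 0 < Real.sqrt ν := Real.sqrt_pos.mpr hν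
  set s := Real.sqrt ν with hsdef
  have hs : s ^ 2 = ν := Real.sq_sqrt hν.le
  have ha : (1 + s) ≠ 0 := by positivity
  set z := (1 - s) / (1 + s) with hz
  have h1z : 1 - z = 2 * s / (1 + s) := by rw [hz]; field_simp; ring
  have h2z : 1 + z = 2 / (1 + s) := by rw [hz]; field_simp; ring
  set G : ℤ → ℝ := fun t => 4 * ν * ν ^ (2 * t) / (ν + ν ^ (2 * t)) ^ 2 with hG
  have key : ∀ t : ℤ, 4 * ν ^ (2 * t) * (1 - z ^ 2) ^ 2 /
      ((1 - z) ^ 2 + ν ^ (2 * t) * (1 + z) ^ 2) ^ 2 = G t := by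
    intro t
    have hw : (0:ℝ) < ν ^ (2 * t) := zpow_pos hν _
    have h12 : 1 - z ^ 2 = (1 - z) * (1 + z) := by ring
    have hd : ν + ν ^ (2*t) ≠ 0 := by positivity
    simp only [hG]
    rw [h12, h1z, h2z, ← hs]
    field_simp
  -- summability of the ℕ-indexed series
  have hsum0 : Summable (fun n : ℕ => ν ^ (2*n+1) / (1 + ν ^ (2*n+1)) ^ 2) := by
    have hg : Summable (fun n : ℕ => ν * (ν^2)^n) :=
      (summable_geometric_of_lt_one (by positivity) (by nlinarith)).mul_left ν
    refine Summable.of_nonneg_of_le (fun n => by positivity) (fun n => ?_) hg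
    have h1 : (1:ℝ) ≤ (1 + ν ^ (2*n+1)) ^ 2 := by nlinarith [pow_pos hν (2*n+1)]
    calc ν ^ (2*n+1) / (1 + ν ^ (2*n+1)) ^ 2 ≤ ν ^ (2*n+1) / 1 :=
          div_le_div_of_nonneg_left (by positivity) (by norm_num) h1
      _ = ν * (ν^2)^n := by rw [div_one, ← pow_mul]; ring
  set S := ∑' n : ℕ, ν ^ (2*n+1) / (1 + ν ^ (2*n+1)) ^ 2 with hS
  set u : ℕ → ℝ := fun n => 4 * (ν ^ (2*n+1) / (1 + ν ^ (2*n+1)) ^ 2) with hu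
  have hU : HasSum u (4 * S) := hsum0.hasSum.mul_left 4
  -- case values of G
  have hcase0 : G (Int.ofNat 0) = u 0 := by
    simp only [hG, hu]
    norm_num
    ring
  have hcasep : ∀ n : ℕ, G (Int.ofNat (n + 1)) = u n := by
    intro n
    simp only [hG, hu]
    have he : (2 * (Int.ofNat (n+1)) : ℤ) = ((2*n+2 : ℕ) : ℤ) := by
      simp [Int.ofNat_eq_natCast]; ring
    rw [he, zpow_natCast]
    have h1 : (1:ℝ) + ν ^ (2*n+1) ≠ 0 := by positivity
    have h2 : ν + ν ^ (2*n+2) ≠ 0 := by positivity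
    field_simp
    ring
  have hcasen : ∀ n : ℕ, G (Int.negSucc n) = u (n + 1) := by
    intro n
    simp only [hG, hu]
    have he : (2 * (Int.negSucc n) : ℤ) = -((2*n+2 : ℕ) : ℤ) := by
      simp [Int.negSucc_eq]; ring
    rw [he, zpow_neg, zpow_natCast]
    have hv : (0:ℝ) < ν ^ (2*n+2) := pow_pos hν _
    have h1 : (1:ℝ) + ν ^ (2*(n+1)+1) ≠ 0 := by positivity
    field_simp
    ring
  -- positive part
  have hpos : HasSum (fun n : ℕ => G (Int.ofNat n)) (4 * S + u 0) := by
    have h1 : HasSum (fun n : ℕ => G (Int.ofNat (n + 1))) (4 * S) := by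
      simpa only [hcasep] using hU
    have h2 := (hasSum_nat_add_iff (f := fun n : ℕ => G (Int.ofNat n)) (g := 4 * S) 1).mp h1
    have hcase0' : G 0 = u 0 := hcase0
    simpa [hcase0'] using h2
  -- negative part
  have hneg : HasSum (fun n : ℕ => G (Int.negSucc n)) (4 * S - u 0) := by
    have h1 : HasSum (fun n : ℕ => u (n + 1)) (4 * S - u 0) := by
      apply (hasSum_nat_add_iff (f := u) 1).mpr
      rw [Finset.range_one, Finset.sum_singleton, sub_add_cancel]
      exact hU
    simpa only [hcasen] using h1
  have htot : HasSum G (8 * S) := by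
    have h := hpos.int_rec hneg
    have heq : (Int.rec (fun n : ℕ => G (Int.ofNat n)) (fun n : ℕ => G (Int.negSucc n)) : ℤ → ℝ) = G := by
      funext t
      cases t <;> rfl
    rw [heq] at h
    convert h using 1
    ring
  rw [Lbar, tsum_congr key, htot.tsum_eq, hS]
end

section
/- For 0 < ν < 1, the series Γ₀(ν) = 1 - 16 Σ_{t=1}^{∞} (1 - 4ν^t + ν^{2t})ν^t/(1+ν^t)^4 equals 1 + 16 Σ_{k=1}^{∞} (-1)^k k³ ν^k/(1-ν^k). -/
set_option maxHeartbeats 1000000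

lemma cast_choose_one (n : ℕ) : (((n + 1).choose 1 : ℕ) : ℝ) = (n : ℝ) + 1 := by
  rw [Nat.choose_one_right]; push_cast; ring

lemma cast_choose_two (n : ℕ) : (((n + 2).choose 2 : ℕ) : ℝ) = ((n : ℝ) + 1) * ((n : ℝ) + 2) / 2 := by
  induction n with
  | zero => norm_num
  | succ n ih =>
    have h : (n + 1 + 2).choose 2 = (n + 2).choose 1 + (n + 2).choose 2 :=
      Nat.choose_succ_succ _ _
    rw [h, Nat.cast_add, ih, Nat.choose_one_right]
    push_cast
    ring

lemma cast_choose_three (n : ℕ) :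
    (((n + 3).choose 3 : ℕ) : ℝ) = ((n : ℝ) + 1) * ((n : ℝ) + 2) * ((n : ℝ) + 3) / 6 := by
  induction n with
  | zero => norm_num
  | succ n ih =>
    have h : (n + 1 + 3).choose 3 = (n + 3).choose 2 + (n + 3).choose 3 :=
      Nat.choose_succ_succ _ _
    rw [h, Nat.cast_add, ih, show n + 3 = (n + 1) + 2 from rfl, cast_choose_two]
    push_cast
    ring

lemma hasSum_cube_mul_geometric {x : ℝ} (hx : |x| < 1) :
    HasSum (fun n : ℕ => ((n : ℝ) + 1) ^ 3 * x ^ n) ((1 + 4 * x + x ^ 2) / (1 - x) ^ 4) := by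
  have hx' : ‖x‖ < 1 := by rwa [Real.norm_eq_abs]
  have h3 := hasSum_choose_mul_geometric_of_norm_lt_one (𝕜 := ℝ) 3 hx'
  have h2 := hasSum_choose_mul_geometric_of_norm_lt_one (𝕜 := ℝ) 2 hx'
  have h1 := hasSum_choose_mul_geometric_of_norm_lt_one (𝕜 := ℝ) 1 hx'
  have hne : (1 : ℝ) - x ≠ 0 := by
    intro h
    have : x = 1 := by linarith
    rw [this] at hx; norm_num at hx
  have key := ((h3.mul_left 6).sub (h2.mul_left 6)).add h1
  have hfun : (fun b : ℕ => 6 * (((b + 3).choose 3 : ℝ) * x ^ b)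
      - 6 * (((b + 2).choose 2 : ℝ) * x ^ b) + ((b + 1).choose 1 : ℝ) * x ^ b)
      = fun n : ℕ => ((n : ℝ) + 1) ^ 3 * x ^ n := by
    funext n
    rw [cast_choose_three, cast_choose_two, cast_choose_one]
    ring
  rw [hfun] at key
  have hval : 6 * (1 / (1 - x) ^ (3 + 1)) - 6 * (1 / (1 - x) ^ (2 + 1)) + 1 / (1 - x) ^ (1 + 1)
      = (1 + 4 * x + x ^ 2) / (1 - x) ^ 4 := by
    field_simp
    ring
  rwa [hval] at key

theorem gamma0_identity (ν : ℝ) (hν : 0 < ν) (hν1 : ν < 1) :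
    1 - 16 * ∑' t : ℕ, (1 - 4 * ν ^ (t + 1) + ν ^ (2 * (t + 1))) * ν ^ (t + 1) /
        (1 + ν ^ (t + 1)) ^ 4 =
    1 + 16 * ∑' k : ℕ, (-1) ^ (k + 1) * ((k : ℝ) + 1) ^ 3 * ν ^ (k + 1) /
        (1 - ν ^ (k + 1)) := by
  set f : ℕ → ℕ → ℝ := fun k t => (-1) ^ (k + 1) * ((k : ℝ) + 1) ^ 3 * ν ^ ((k + 1) * (t + 1))
    with hf
  have hq : ∀ m : ℕ, 0 < ν ^ (m + 1) ∧ ν ^ (m + 1) < 1 := fun m =>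
    ⟨pow_pos hν _, pow_lt_one₀ hν.le hν1 (Nat.succ_ne_zero m)⟩
  -- summability over ℕ × ℕ
  have h0 : Summable (fun k : ℕ => ((k : ℝ) + 1) ^ 3 * ν ^ k) := by
    have hb : Summable (fun k : ℕ => ((k : ℝ) + 1) ^ 3 * ν ^ (k + 1)) := by
      have h := summable_pow_mul_geometric_of_norm_lt_one (R := ℝ) 3
        (r := ν) (by rw [Real.norm_eq_abs, abs_of_pos hν]; exact hν1)
      have h' := (summable_nat_add_iff 1).2 h
      convert h' using 2 with k
      · rfl
      push_cast
      ring
    have h2 := hb.mul_right ν⁻¹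
    convert h2 using 2 with k
    · rfl
    field_simp
    rw [pow_succ]
  have hgeo : Summable (fun t : ℕ => ν ^ (t + 1)) :=
    (summable_nat_add_iff 1).2 (summable_geometric_of_lt_one hν.le hν1)
  have hgsum : Summable (fun p : ℕ × ℕ => (((p.1 : ℝ) + 1) ^ 3 * ν ^ p.1) * ν ^ (p.2 + 1)) :=
    Summable.mul_of_nonneg h0 hgeo (fun k => by positivity) (fun t => by positivity)
  have habs : Summable (fun p : ℕ × ℕ => |f p.1 p.2|) := by
    apply hgsum.of_nonneg_of_le (fun p => abs_nonneg _)
    rintro ⟨k, t⟩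
    have h1 : |f k t| = ((k : ℝ) + 1) ^ 3 * ν ^ ((k + 1) * (t + 1)) := by
      rw [hf]
      rw [abs_mul, abs_mul, abs_pow, abs_neg, abs_one, one_pow, one_mul,
        abs_of_nonneg (by positivity : (0:ℝ) ≤ ((k : ℝ) + 1) ^ 3),
        abs_of_nonneg (by positivity : (0:ℝ) ≤ ν ^ ((k + 1) * (t + 1)))]
    rw [h1]
    have hle : ν ^ ((k + 1) * (t + 1)) ≤ ν ^ (k + (t + 1)) := by
      apply pow_le_pow_of_le_one hν.le hν1.le
      nlinarith [Nat.zero_le k, Nat.zero_le t]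
    calc ((k : ℝ) + 1) ^ 3 * ν ^ ((k + 1) * (t + 1))
        ≤ ((k : ℝ) + 1) ^ 3 * ν ^ (k + (t + 1)) :=
          mul_le_mul_of_nonneg_left hle (by positivity)
      _ = (((k : ℝ) + 1) ^ 3 * ν ^ k) * ν ^ (t + 1) := by rw [pow_add]; ring
  have hsum : Summable (Function.uncurry f) := Summable.of_abs habs
  -- rows: fixed k, sum over t (geometric)
  have hrow : ∀ k : ℕ, HasSum (fun t => f k t)
      ((-1) ^ (k + 1) * ((k : ℝ) + 1) ^ 3 * ν ^ (k + 1) * (1 - ν ^ (k + 1))⁻¹) := by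
    intro k
    have hg : HasSum (fun t : ℕ => (ν ^ (k + 1)) ^ t) ((1 - ν ^ (k + 1))⁻¹) :=
      hasSum_geometric_of_lt_one (hq k).1.le (hq k).2
    have h := hg.mul_left ((-1) ^ (k + 1) * ((k : ℝ) + 1) ^ 3 * ν ^ (k + 1))
    have hfun : (fun t : ℕ => (-1) ^ (k + 1) * ((k : ℝ) + 1) ^ 3 * ν ^ (k + 1)
        * (ν ^ (k + 1)) ^ t) = fun t => f k t := by
      funext t
      rw [hf]
      simp only
      rw [← pow_mul ν (k + 1) t, mul_assoc, ← pow_add ν (k + 1) ((k + 1) * t),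
        show (k + 1) + (k + 1) * t = (k + 1) * (t + 1) by ring]
    rwa [hfun] at h
  -- columns: fixed t, sum over k (cubic series)
  have hcol : ∀ t : ℕ, HasSum (fun k => f k t)
      (-((1 - 4 * ν ^ (t + 1) + ν ^ (2 * (t + 1))) * ν ^ (t + 1) / (1 + ν ^ (t + 1)) ^ 4)) := by
    intro t
    set q : ℝ := ν ^ (t + 1) with hqdef
    have hq0 : 0 < q := (hq t).1
    have hq1 : q < 1 := (hq t).2
    have hx : |(-q)| < 1 := by rw [abs_neg, abs_of_pos hq0]; exact hq1
    have hc := (hasSum_cube_mul_geometric hx).mul_left (-q)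
    have hfun : (fun k : ℕ => -q * (((k : ℝ) + 1) ^ 3 * (-q) ^ k)) = fun k => f k t := by
      funext k
      rw [hf]
      simp only
      have e1 : ν ^ ((k + 1) * (t + 1)) = q ^ (k + 1) := by
        rw [hqdef, ← pow_mul, Nat.mul_comm]
      rw [e1, neg_pow, pow_succ, pow_succ]
      ring
    have hne : (1 : ℝ) + q ≠ 0 := by positivity
    have h2 : ν ^ (2 * (t + 1)) = q ^ 2 := by rw [hqdef, ← pow_mul, Nat.mul_comm]
    have hval : -q * ((1 + 4 * (-q) + (-q) ^ 2) / (1 - (-q)) ^ 4)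
        = -((1 - 4 * q + ν ^ (2 * (t + 1))) * q / (1 + q) ^ 4) := by
      rw [h2]
      rw [sub_neg_eq_add]
      field_simp
      ring
    rw [hfun, hval] at hc
    exact hc
  -- swap sums and conclude
  have hswap : ∑' k, ∑' t, f k t = ∑' t, ∑' k, f k t :=
    (Summable.tsum_comm' hsum (fun k => (hrow k).summable) (fun t => (hcol t).summable)).symm
  have hL : ∑' t : ℕ, (1 - 4 * ν ^ (t + 1) + ν ^ (2 * (t + 1))) * ν ^ (t + 1) /
      (1 + ν ^ (t + 1)) ^ 4 = -∑' t, ∑' k, f k t := by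
    rw [← tsum_neg]
    congr 1
    funext t
    rw [(hcol t).tsum_eq]
    ring
  have hR : ∑' k : ℕ, (-1) ^ (k + 1) * ((k : ℝ) + 1) ^ 3 * ν ^ (k + 1) /
      (1 - ν ^ (k + 1)) = ∑' k, ∑' t, f k t := by
    congr 1
    funext k
    rw [(hrow k).tsum_eq]
    ring
  rw [hL, hR, hswap]
  ring
end
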